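/- arXiv:1604.00217 — 2 statements merged into one kernel-verified Lean document; each statement's English description precedes it below -/
import Mathlib

section
/- Let P, Q be positive definite n×n matrices, R^i > 0 positive scalars, and let ω^i(z, y) = 1 if (z - τ^i)·y < 0 and 0 otherwise. Then the cost J(x̂_{0}, ..., x̂_{N}) = ‖x̂_0 - x̄‖²_P + Σ_{k=0}^{N-1} ‖x̂_{k+1} - A x̂_k - B u_k‖²_Q + Σ_{i=1}^{p} Σ_{k=0}^{N} ω^i(C^i x̂_k, y_k^i)·R^i·(C^i x̂_k - τ^i)² is strictly convex as a function of (x̂_0, ..., x̂_N) ∈ (ℝⁿ)^{N+1}, and hence has a unique global minimizer. -/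
/-!
Write the quadratic part of the cost as `∑ⱼ ‖rⱼ(X)‖²_{Mⱼ}`, where
`r(X) = (X₀ - x̄, X₁ - A X₀ - B u₀, …, X_N - A X_{N-1} - B u_{N-1})` and `M₀ = P`, `Mⱼ = Q` for
`j ≥ 1`. The map `r` is affine and injective (the dynamics recover `X` from `r(X)` step by step),
so this part is strictly convex and coercive in `X`. Since `y = ±1`, each measurement term equals
`R · max(-(z - τ) y, 0)²` with `z = Cⁱ X_k`, which is convex and nonnegative. The cost is therefore
strictly convex and tends to infinity at infinity, so it has exactly one global minimizer.
-/

open Matrix Set Filter Function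

section Convexity

variable {𝕜 E F β : Type*} [Ring 𝕜] [PartialOrder 𝕜] [AddCommGroup E] [AddCommGroup F]
  [Module 𝕜 E] [Module 𝕜 F] [AddCommMonoid β] [PartialOrder β] [Module 𝕜 β]

theorem StrictConvexOn.comp_affineMap {f : F → β} {s : Set F} (hf : StrictConvexOn 𝕜 s f)
    (g : E →ᵃ[𝕜] F) (hg : Injective g) : StrictConvexOn 𝕜 (g ⁻¹' s) (f ∘ g) :=
  ⟨hf.1.affine_preimage g, fun x hx y hy hxy a b ha hb hab => by
    simpa only [Function.comp_apply, Convex.combo_affine_apply hab] using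
      hf.2 hx hy (hg.ne hxy) ha hb hab⟩

theorem ConvexOn.sum [IsOrderedAddMonoid β] {ι : Type*} {t : Finset ι} {s : Set E}
    {f : ι → E → β} (hs : Convex 𝕜 s) (hf : ∀ i ∈ t, ConvexOn 𝕜 s (f i)) :
    ConvexOn 𝕜 s fun x => ∑ i ∈ t, f i x :=
  ⟨hs, fun x hx y hy a b ha hb hab => by
    simpa only [Finset.smul_sum, ← Finset.sum_add_distrib] using
      Finset.sum_le_sum fun i hi => (hf i hi).2 hx hy ha hb hab⟩

theorem StrictConvexOn.sum_pi [IsOrderedCancelAddMonoid β] {ι : Type*} [Fintype ι]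
    {E : ι → Type*} [∀ i, AddCommGroup (E i)] [∀ i, Module 𝕜 (E i)] {f : ∀ i, E i → β}
    (hf : ∀ i, StrictConvexOn 𝕜 univ (f i)) :
    StrictConvexOn 𝕜 univ fun x : ∀ i, E i => ∑ i, f i (x i) :=
  ⟨convex_univ, fun x _ y _ hxy a b ha hb hab => by
    obtain ⟨i, hi⟩ := Function.ne_iff.1 hxy
    simpa only [Pi.add_apply, Pi.smul_apply, Finset.smul_sum, ← Finset.sum_add_distrib] using
      Finset.sum_lt_sum (fun j _ => (hf j).convexOn.2 trivial trivial ha.le hb.le hab)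
        ⟨i, Finset.mem_univ i, (hf i).2 trivial trivial hi ha hb hab⟩⟩

end Convexity

theorem tendsto_sum_pi_cocompact_atTop {ι : Type*} [Fintype ι] {X : ι → Type*}
    [∀ i, TopologicalSpace (X i)] {f : ∀ i, X i → ℝ} (hf₀ : ∀ i x, 0 ≤ f i x)
    (hf : ∀ i, Tendsto (f i) (cocompact (X i)) atTop) :
    Tendsto (fun x : ∀ i, X i => ∑ i, f i (x i)) (cocompact (∀ i, X i)) atTop := by
  rw [← coprodᵢ_cocompact, Filter.coprodᵢ, tendsto_iSup]
  exact fun i => tendsto_atTop_mono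
    (fun x => Finset.single_le_sum (fun j _ => hf₀ j (x j)) (Finset.mem_univ i))
    ((hf i).comp tendsto_comap)

section FiniteDimensional

variable {E F : Type*} [NormedAddCommGroup E] [NormedSpace ℝ E] [FiniteDimensional ℝ E]

theorem AffineMap.tendsto_cocompact_of_injective [NormedAddCommGroup F] [NormedSpace ℝ F]
    [ProperSpace F] {g : E →ᵃ[ℝ] F} (hg : Injective g) :
    Tendsto g (cocompact E) (cocompact F) := by
  obtain ⟨K, hK⟩ := AffineMap.antilipschitzWith_of_finiteDimensional hg
  simpa only [Metric.cobounded_eq_cocompact] using hK.tendsto_cobounded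

theorem StrictConvexOn.existsUnique_isMinOn_of_tendsto {f : E → ℝ}
    (hf : StrictConvexOn ℝ univ f) (hf_lim : Tendsto f (cocompact E) atTop) :
    ∃! x, IsMinOn f univ x := by
  have hcont : Continuous f := continuousOn_univ.1 (hf.convexOn.continuousOn isOpen_univ)
  obtain ⟨x, hx⟩ := hcont.exists_forall_le hf_lim
  exact ⟨x, fun y _ => hx y, fun y hy => hf.eq_of_isMinOn hy (fun z _ => hx z) trivial trivial⟩

theorem strictConvexOn_comp_add_and_existsUnique_isMinOn [NormedAddCommGroup F]
    [NormedSpace ℝ F] [ProperSpace F] {Φ : F → ℝ} {G : E → ℝ} {r : E →ᵃ[ℝ] F}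
    (hr : Injective r) (hΦ : StrictConvexOn ℝ univ Φ) (hΦ_lim : Tendsto Φ (cocompact F) atTop)
    (hG : ConvexOn ℝ univ G) (hG₀ : ∀ x, 0 ≤ G x) :
    StrictConvexOn ℝ univ (fun x => Φ (r x) + G x) ∧
      ∃! x, IsMinOn (fun x => Φ (r x) + G x) univ x := by
  have hconv : StrictConvexOn ℝ univ fun x => Φ (r x) + G x :=
    (hΦ.comp_affineMap r hr).add_convexOn hG
  refine ⟨hconv, hconv.existsUnique_isMinOn_of_tendsto ?_⟩
  exact tendsto_atTop_mono (fun x => le_add_of_nonneg_right (hG₀ x))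
    (hΦ_lim.comp (r.tendsto_cocompact_of_injective hr))

end FiniteDimensional

namespace Matrix.PosDef

variable {ι : Type*} [Fintype ι] {M : Matrix ι ι ℝ}

theorem strictConvexOn_dotProduct_mulVec (hM : M.PosDef) :
    StrictConvexOn ℝ univ fun v : ι → ℝ => v ⬝ᵥ M *ᵥ v := by
  refine ⟨convex_univ, fun x _ y _ hxy a b ha hb hab => ?_⟩
  have hgap : a • (x ⬝ᵥ M *ᵥ x) + b • (y ⬝ᵥ M *ᵥ y) - (a • x + b • y) ⬝ᵥ M *ᵥ (a • x + b • y)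
      = a * b * ((x - y) ⬝ᵥ M *ᵥ (x - y)) := by
    obtain rfl : b = 1 - a := by linarith
    simp only [mulVec_add, mulVec_smul, mulVec_sub, add_dotProduct, sub_dotProduct,
      smul_dotProduct, dotProduct_add, dotProduct_sub, dotProduct_smul, smul_eq_mul]
    ring
  have hpos : 0 < (x - y) ⬝ᵥ M *ᵥ (x - y) := by
    simpa using hM.dotProduct_mulVec_pos (sub_ne_zero.2 hxy)
  nlinarith [mul_pos (mul_pos ha hb) hpos]

theorem exists_pos_mul_sq_norm_le (hM : M.PosDef) :
    ∃ ε > 0, ∀ v : ι → ℝ, ε * ‖v‖ ^ 2 ≤ v ⬝ᵥ M *ᵥ v := by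
  rcases isEmpty_or_nonempty ι with hι | hι
  · exact ⟨1, one_pos, fun v => by simp [Subsingleton.elim v 0]⟩
  have hscale (c : ℝ) (u : ι → ℝ) : (c • u) ⬝ᵥ M *ᵥ (c • u) = c ^ 2 * (u ⬝ᵥ M *ᵥ u) := by
    simp only [mulVec_smul, dotProduct_smul, smul_dotProduct, smul_eq_mul]
    ring
  -- the minimum of the form on the unit sphere is the constant
  obtain ⟨w, hw, hmin⟩ := (isCompact_sphere (0 : ι → ℝ) 1).exists_isMinOn
    (NormedSpace.sphere_nonempty.2 zero_le_one)
    (by fun_prop : Continuous fun v : ι → ℝ => v ⬝ᵥ M *ᵥ v).continuousOn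
  have hw0 : w ≠ 0 := ne_zero_of_mem_unit_sphere ⟨w, hw⟩
  refine ⟨w ⬝ᵥ M *ᵥ w, by simpa using hM.dotProduct_mulVec_pos hw0, fun v => ?_⟩
  rcases eq_or_ne v 0 with rfl | hv
  · simp
  have hu : ‖v‖⁻¹ • v ∈ Metric.sphere (0 : ι → ℝ) 1 := by
    simpa using norm_smul_inv_norm (𝕜 := ℝ) hv
  calc w ⬝ᵥ M *ᵥ w * ‖v‖ ^ 2 ≤ ‖v‖ ^ 2 * ((‖v‖⁻¹ • v) ⬝ᵥ M *ᵥ (‖v‖⁻¹ • v)) := by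
        rw [mul_comm]
        exact mul_le_mul_of_nonneg_left (hmin hu) (by positivity)
    _ = v ⬝ᵥ M *ᵥ v := by rw [← hscale, smul_inv_smul₀ (norm_ne_zero_iff.2 hv)]

theorem tendsto_dotProduct_mulVec_cocompact (hM : M.PosDef) :
    Tendsto (fun v : ι → ℝ => v ⬝ᵥ M *ᵥ v) (cocompact _) atTop := by
  obtain ⟨ε, hε, hle⟩ := hM.exists_pos_mul_sq_norm_le
  exact tendsto_atTop_mono hle <| (tendsto_pow_atTop two_ne_zero).comp
    tendsto_norm_cocompact_atTop |>.const_mul_atTop hε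

end Matrix.PosDef

section Trajectory

variable {n N : ℕ}

def trajectoryDefect (A : Matrix (Fin n) (Fin n) ℝ) :
    (Fin (N + 1) → Fin n → ℝ) →ₗ[ℝ] Fin (N + 1) → Fin n → ℝ where
  toFun X := vecCons (X 0) fun k => X k.succ - A *ᵥ X k.castSucc
  map_add' X Y := by
    ext j : 1
    refine Fin.cases ?_ (fun k => ?_) j
    · rfl
    · simp only [Pi.add_apply, cons_val_succ, mulVec_add]
      abel
  map_smul' c X := by
    ext j : 1
    refine Fin.cases ?_ (fun k => ?_) j
    · rfl
    · simp [mulVec_smul, smul_sub]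

theorem trajectoryDefect_injective (A : Matrix (Fin n) (Fin n) ℝ) :
    Injective (trajectoryDefect (N := N) A) := by
  refine (injective_iff_map_eq_zero _).2 fun X hX => funext fun j => ?_
  induction j using Fin.induction with
  | zero => exact congrFun hX 0
  | succ k ih =>
    have h : X k.succ - A *ᵥ X k.castSucc = 0 := congrFun hX k.succ
    rwa [ih, Pi.zero_apply, mulVec_zero, sub_zero] at h

def trajectoryResidual (A : Matrix (Fin n) (Fin n) ℝ) (c : Fin (N + 1) → Fin n → ℝ) :
    (Fin (N + 1) → Fin n → ℝ) →ᵃ[ℝ] Fin (N + 1) → Fin n → ℝ :=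
  (trajectoryDefect A).toAffineMap - AffineMap.const ℝ _ c

theorem trajectoryResidual_injective (A : Matrix (Fin n) (Fin n) ℝ)
    (c : Fin (N + 1) → Fin n → ℝ) : Injective (trajectoryResidual A c) := fun _ _ h =>
  trajectoryDefect_injective A (sub_left_injective h)

@[simp] theorem trajectoryResidual_apply_zero (A : Matrix (Fin n) (Fin n) ℝ)
    (c : Fin (N + 1) → Fin n → ℝ) (X : Fin (N + 1) → Fin n → ℝ) :
    trajectoryResidual A c X 0 = X 0 - c 0 := rfl

@[simp] theorem trajectoryResidual_apply_succ (A : Matrix (Fin n) (Fin n) ℝ)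
    (c : Fin (N + 1) → Fin n → ℝ) (X : Fin (N + 1) → Fin n → ℝ) (k : Fin N) :
    trajectoryResidual A c X k.succ = X k.succ - A *ᵥ X k.castSucc - c k.succ := rfl

end Trajectory

/-- The measurement term `ωⁱ(z, y) · Rⁱ · (z - τⁱ)²` of the cost, with `z = Cⁱ x̂_k`. -/
noncomputable def thresholdPenalty (τ y R z : ℝ) : ℝ :=
  (if (z - τ) * y < 0 then 1 else 0) * R * (z - τ) ^ 2

theorem thresholdPenalty_nonneg (τ y : ℝ) {R : ℝ} (hR : 0 ≤ R) (z : ℝ) :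
    0 ≤ thresholdPenalty τ y R z := by
  unfold thresholdPenalty
  split_ifs <;> positivity

theorem thresholdPenalty_eq_max_sq {y : ℝ} (hy : y ^ 2 = 1) (τ R z : ℝ) :
    thresholdPenalty τ y R z = R * max (-((z - τ) * y)) 0 ^ 2 := by
  unfold thresholdPenalty
  split_ifs with h
  · rw [max_eq_left (by linarith)]
    linear_combination (-R * (z - τ) ^ 2) * hy
  · rw [max_eq_right (by linarith)]
    ring

theorem convexOn_thresholdPenalty (τ : ℝ) {y : ℝ} (hy : y ^ 2 = 1) {R : ℝ} (hR : 0 ≤ R) :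
    ConvexOn ℝ univ (thresholdPenalty τ y R) := by
  have haff : ConvexOn ℝ univ fun z : ℝ => -((z - τ) * y) :=
    ⟨convex_univ, fun z _ w _ a b _ _ hab => le_of_eq <| by
      simp only [smul_eq_mul]
      linear_combination (-(τ * y)) * hab⟩
  rw [funext (thresholdPenalty_eq_max_sq hy τ R)]
  exact ((haff.sup (convexOn_const 0 convex_univ)).pow (fun _ _ => le_sup_right) 2).smul hR

theorem stmt_5 {n m p N : ℕ}
    (P Q : Matrix (Fin n) (Fin n) ℝ) (hP : P.PosDef) (hQ : Q.PosDef)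
    (R : Fin p → ℝ) (hR : ∀ i, 0 < R i)
    (A : Matrix (Fin n) (Fin n) ℝ) (B : Matrix (Fin n) (Fin m) ℝ)
    (C : Fin p → (Fin n → ℝ)) (τ : Fin p → ℝ)
    (xbar : Fin n → ℝ) (u : Fin N → (Fin m → ℝ))
    (y : Fin (N + 1) → Fin p → ℝ) (hy : ∀ k i, y k i = 1 ∨ y k i = -1) :
    StrictConvexOn ℝ Set.univ
      (fun X : Fin (N + 1) → (Fin n → ℝ) =>
        (X 0 - xbar) ⬝ᵥ P.mulVec (X 0 - xbar)
        + ∑ k : Fin N,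
            (X k.succ - A.mulVec (X k.castSucc) - B.mulVec (u k)) ⬝ᵥ
              Q.mulVec (X k.succ - A.mulVec (X k.castSucc) - B.mulVec (u k))
        + ∑ i : Fin p, ∑ k : Fin (N + 1),
            (if (C i ⬝ᵥ X k - τ i) * y k i < 0 then (1 : ℝ) else 0) * R i *
              (C i ⬝ᵥ X k - τ i) ^ 2) ∧
    ∃! Xo : Fin (N + 1) → (Fin n → ℝ),
      IsMinOn
        (fun X : Fin (N + 1) → (Fin n → ℝ) =>
          (X 0 - xbar) ⬝ᵥ P.mulVec (X 0 - xbar)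
          + ∑ k : Fin N,
              (X k.succ - A.mulVec (X k.castSucc) - B.mulVec (u k)) ⬝ᵥ
                Q.mulVec (X k.succ - A.mulVec (X k.castSucc) - B.mulVec (u k))
          + ∑ i : Fin p, ∑ k : Fin (N + 1),
              (if (C i ⬝ᵥ X k - τ i) * y k i < 0 then (1 : ℝ) else 0) * R i *
                (C i ⬝ᵥ X k - τ i) ^ 2)
        Set.univ Xo := by
  have hM (j : Fin (N + 1)) : (vecCons P (fun _ => Q) j).PosDef := Fin.cases hP (fun _ => hQ) j
  have hy_sq (k : Fin (N + 1)) (i : Fin p) : y k i ^ 2 = 1 := by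
    rcases hy k i with h | h <;> simp [h]
  have hquad_conv := StrictConvexOn.sum_pi fun j => (hM j).strictConvexOn_dotProduct_mulVec
  have hquad_lim := tendsto_sum_pi_cocompact_atTop
    (fun j v => by simpa using (hM j).posSemidef.dotProduct_mulVec_nonneg v)
    fun j => (hM j).tendsto_dotProduct_mulVec_cocompact
  have hpen_conv : ConvexOn ℝ univ fun X : Fin (N + 1) → Fin n → ℝ =>
      ∑ i, ∑ k, thresholdPenalty (τ i) (y k i) (R i) (C i ⬝ᵥ X k) :=
    ConvexOn.sum convex_univ fun i _ => ConvexOn.sum convex_univ fun k _ =>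
      (convexOn_thresholdPenalty (τ i) (hy_sq k i) (hR i).le).comp_linearMap
        (dotProductBilin ℝ ℝ (C i) ∘ₗ LinearMap.proj (φ := fun _ => Fin n → ℝ) k)
  have hpen_nonneg (X : Fin (N + 1) → Fin n → ℝ) :
      0 ≤ ∑ i, ∑ k, thresholdPenalty (τ i) (y k i) (R i) (C i ⬝ᵥ X k) :=
    Finset.sum_nonneg fun i _ => Finset.sum_nonneg fun k _ =>
      thresholdPenalty_nonneg _ _ (hR i).le _
  simpa only [Fin.sum_univ_succ, trajectoryResidual_apply_zero, trajectoryResidual_apply_succ,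
    cons_val_zero, cons_val_succ, thresholdPenalty] using
    strictConvexOn_comp_add_and_existsUnique_isMinOn
      (trajectoryResidual_injective A (vecCons xbar fun k => B *ᵥ u k))
      hquad_conv hquad_lim hpen_conv hpen_nonneg
end

section
/- Let z_k^i = C^i x_k + v_k^i with y_k^i = sign-type binary output (y = +1 iff z ≥ τ^i). If k is an up-down switching instant (y_k^i = +1, y_{k+1}^i = -1) for the system x_{k+1} = A x_k + B u_k + w_k, then there exists α ∈ [0,1] such that τ^i = C^i x_k + δ^i_k + η^i_k, where δ^i_k = (1-α)C^i(A - I)x_k + (1-α)C^i B u_k and η^i_k = α v_k^i + (1-α)v_{k+1}^i + (1-α)C^i w_k. -/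
open Matrix

theorem exists_convex_combination_eq_of_mem_Icc {a b t : ℝ} (ht : t ∈ Set.Icc a b) :
    ∃ α ∈ Set.Icc (0 : ℝ) 1, α * b + (1 - α) * a = t := by
  rw [← segment_eq_Icc (ht.1.trans ht.2), segment_eq_image] at ht
  obtain ⟨α, hα, rfl⟩ := ht
  exact ⟨α, hα, by simp only [smul_eq_mul]; ring⟩

theorem convex_output_eq_add_drift_add_noise {n m : ℕ}
    (A : Matrix (Fin n) (Fin n) ℝ) (B : Matrix (Fin n) (Fin m) ℝ) (C xk w : Fin n → ℝ)
    (u : Fin m → ℝ) (vk vk1 α : ℝ) :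
    α * (C ⬝ᵥ xk + vk) + (1 - α) * (C ⬝ᵥ (A *ᵥ xk + B *ᵥ u + w) + vk1) =
      C ⬝ᵥ xk
        + ((1 - α) * (C ⬝ᵥ (A - 1) *ᵥ xk) + (1 - α) * (C ⬝ᵥ B *ᵥ u))
        + (α * vk + (1 - α) * vk1 + (1 - α) * (C ⬝ᵥ w)) := by
  simp only [sub_mulVec, one_mulVec, dotProduct_add, dotProduct_sub]
  ring

theorem stmt_16 {n m : ℕ}
    (A : Matrix (Fin n) (Fin n) ℝ) (B : Matrix (Fin n) (Fin m) ℝ)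
    (C : Fin n → ℝ) (τ : ℝ)
    (xk xk1 w : Fin n → ℝ) (u : Fin m → ℝ) (vk vk1 : ℝ)
    (hdyn : xk1 = A.mulVec xk + B.mulVec u + w)
    (hyk : C ⬝ᵥ xk + vk ≥ τ)
    (hyk1 : C ⬝ᵥ xk1 + vk1 < τ) :
    ∃ α ∈ Set.Icc (0 : ℝ) 1,
      τ = C ⬝ᵥ xk
        + ((1 - α) * (C ⬝ᵥ (A - 1).mulVec xk) + (1 - α) * (C ⬝ᵥ B.mulVec u))
        + (α * vk + (1 - α) * vk1 + (1 - α) * (C ⬝ᵥ w)) := by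
  obtain ⟨α, hα, hτ⟩ := exists_convex_combination_eq_of_mem_Icc ⟨hyk1.le, hyk⟩
  refine ⟨α, hα, ?_⟩
  rw [← hτ, hdyn, convex_output_eq_add_drift_add_noise]
end
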